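/- arXiv:1503.01086 — 3 statements merged into one kernel-verified Lean document; each statement's English description precedes it below -/
import Mathlib

section
/- For every integer n ≥ 3 (prime or composite), 2·S_n = p_{π(n)}^2 + 2(n + 1 − p_{π(n)})·p_{π(n)+1} + Σ_{k=1}^{π(n)−1} (p_{k+1} − p_k)^2 − n^2 − n, where S_n = Σ_{i=1}^n a_i. -/
open Finset Filter Asymptotics

/-- `a n` is the smallest positive integer such that `n + a n` is prime. -/
noncomputable def a (n : ℕ) : ℕ := sInf {k : ℕ | 0 < k ∧ (n + k).Prime}

/-- `p k` is the `k`-th prime (1-indexed, so `p 1 = 2`). -/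
noncomputable def p (k : ℕ) : ℕ := Nat.nth Nat.Prime (k - 1)

/-!
Since `n + a n` is the least prime exceeding `n`, namely `p (π n + 1)`, we have
`a (n + 1) = p (π (n + 1) + 1) - (n + 1)`, and it suffices to check that the right-hand side
grows by exactly `2 * a (n + 1)` from `n` to `n + 1`. When `n + 1` is composite only the
linear terms move. When `n + 1 = p (m + 1)` is prime, with `m = π n`, the index shifts and the
new gap square `(p (m + 1) - p m) ^ 2` exactly absorbs the change of the first two terms.
-/

open Nat
open scoped Nat.Prime

theorem add_sInf_pos_add_eq_nth_count {P : ℕ → Prop} [DecidablePred P]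
    (hP : (Set.ofPred P).Infinite) (n : ℕ) :
    n + sInf {k | 0 < k ∧ P (n + k)} = nth P (count P (n + 1)) := by
  have hle : n ≤ sInf {i | P i ∧ n + 1 ≤ i} :=
    (nth_count_eq_sInf P (n + 1)) ▸ (le_nth_count hP (n + 1)).trans' n.le_succ
  rw [nth_count_eq_sInf, ← Nat.sInf_add hle, add_comm]
  congr 2
  ext k
  simp only [Set.mem_ofPred_eq, add_comm k n]
  exact and_comm.trans (and_congr_right fun _ => by omega)

lemma add_a_eq_nth_primeCounting (n : ℕ) : n + a n = nth Nat.Prime (π n) :=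
  add_sInf_pos_add_eq_nth_count infinite_setOfPred_prime n

lemma p_succ (k : ℕ) : p (k + 1) = nth Nat.Prime k := rfl

lemma a_eq_p_sub (n : ℕ) : (a n : ℤ) = p (π n + 1) - n := by
  rw [p_succ, ← add_a_eq_nth_primeCounting]
  push_cast
  ring

lemma p_primeCounting_succ_of_prime {n : ℕ} (hn : (n + 1).Prime) : p (π n + 1) = n + 1 :=
  nth_count hn

lemma primeCounting_succ (n : ℕ) : π (n + 1) = π n + if (n + 1).Prime then 1 else 0 :=
  count_succ _ _

noncomputable def twiceSumClosedForm (n : ℕ) : ℤ :=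
  (p (π n) : ℤ) ^ 2 + 2 * ((n : ℤ) + 1 - p (π n)) * p (π n + 1) +
    ∑ k ∈ Icc 1 (π n - 1), ((p (k + 1) : ℤ) - p k) ^ 2 - (n : ℤ) ^ 2 - n

lemma twiceSumClosedForm_succ {n : ℕ} (hn : 1 ≤ π n) :
    twiceSumClosedForm (n + 1) = twiceSumClosedForm n + 2 * a (n + 1) := by
  rw [a_eq_p_sub, twiceSumClosedForm, twiceSumClosedForm, primeCounting_succ]
  by_cases hq : (n + 1).Prime
  · obtain ⟨m, hm⟩ : ∃ m, π n = m + 1 := ⟨π n - 1, by omega⟩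
    have hp := p_primeCounting_succ_of_prime hq
    rw [hm] at hp
    rw [if_pos hq, hm, Nat.add_sub_cancel, Nat.add_sub_cancel, sum_Icc_succ_top (by omega), hp]
    push_cast
    ring
  · rw [if_neg hq, add_zero]
    push_cast
    ring

theorem two_mul_sum_a_eq {n : ℕ} (hn : 2 ≤ n) :
    2 * ∑ i ∈ Icc 1 n, (a i : ℤ) = twiceSumClosedForm n := by
  induction n, hn using Nat.le_induction with
  | base =>
    have hπ2 : π 2 = 1 := by decide
    simp [twiceSumClosedForm, sum_Icc_succ_top, a_eq_p_sub, hπ2, p_succ, primeCounting_one]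
  | succ n hn ih =>
    have hπ : 1 ≤ π n := Nat.pos_of_ne_zero (primeCounting_eq_zero_iff.not.mpr (by omega))
    rw [sum_Icc_succ_top (by omega), mul_add, ih, twiceSumClosedForm_succ hπ]

theorem stmt_4 : ∀ n : ℕ, 3 ≤ n →
    2 * (∑ i ∈ Finset.Icc 1 n, (a i : ℤ)) =
      (p (Nat.primeCounting n) : ℤ) ^ 2 +
        2 * ((n : ℤ) + 1 - (p (Nat.primeCounting n) : ℤ)) * (p (Nat.primeCounting n + 1) : ℤ) +
        ∑ k ∈ Finset.Icc 1 (Nat.primeCounting n - 1), ((p (k + 1) : ℤ) - (p k : ℤ)) ^ 2 -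
        (n : ℤ) ^ 2 - (n : ℤ) :=
  fun _ hn => two_mul_sum_a_eq (by omega)
end

section
/- There exists a constant c > 0 such that for all sufficiently large x, Σ_{n ≤ x} log a_n ≥ c · x. -/
open Finset Filter Asymptotics

/-!
For odd `n ≥ 3` the number `n + 1` is even and larger than `2`, hence composite, so `a n ≥ 2`.
Since `log (a n) ≥ 0` for every `n`, the sum up to `x` is at least `log 2` times the number of
odd `n ∈ [3, x]`, which is about `x / 2`.
-/

open Real

lemma a_spec (n : ℕ) : 0 < a n ∧ (n + a n).Prime := by
  obtain ⟨q, hnq, hq⟩ := Nat.exists_infinite_primes (n + 1)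
  exact Nat.sInf_mem (s := {k | 0 < k ∧ (n + k).Prime})
    ⟨q - n, by omega, by rwa [Nat.add_sub_cancel' (by omega)]⟩

lemma two_le_a_of_not_prime {n : ℕ} (h : ¬ (n + 1).Prime) : 2 ≤ a n := by
  obtain ⟨hpos, hprime⟩ := a_spec n
  by_contra! hlt
  have ha : a n = 1 := by omega
  exact h (ha ▸ hprime)

lemma two_le_a_two_mul_add_one {k : ℕ} (hk : 0 < k) : 2 ≤ a (2 * k + 1) :=
  two_le_a_of_not_prime <| by
    rw [show 2 * k + 1 + 1 = 2 * (k + 1) by ring]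
    exact Nat.not_prime_mul (by omega) (by omega)

lemma log_two_mul_le_sum_log_a (N : ℕ) :
    log 2 * ((N - 1) / 2 : ℕ) ≤ ∑ n ∈ Icc 1 N, log (a n) := by
  set K := (N - 1) / 2
  let oddEmb : ℕ ↪ ℕ := ⟨fun k ↦ 2 * k + 1, fun _ _ h ↦ by simp only at h; omega⟩
  calc log 2 * K = ∑ _k ∈ Icc 1 K, log 2 := by simp [mul_comm]
    _ ≤ ∑ k ∈ Icc 1 K, log (a (2 * k + 1)) := sum_le_sum fun k hk ↦
        log_le_log two_pos (by exact_mod_cast two_le_a_two_mul_add_one (mem_Icc.1 hk).1)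
    _ = ∑ n ∈ (Icc 1 K).map oddEmb, log (a n) := by rw [sum_map]; rfl
    _ ≤ ∑ n ∈ Icc 1 N, log (a n) := by
        refine sum_le_sum_of_subset_of_nonneg ?_ fun n _ _ ↦ log_natCast_nonneg _
        rintro _ hn
        obtain ⟨k, hk, rfl⟩ := Finset.mem_map.1 hn
        rw [mem_Icc] at hk ⊢
        change 1 ≤ 2 * k + 1 ∧ 2 * k + 1 ≤ N
        omega

theorem stmt_18 : ∃ c : ℝ, 0 < c ∧ ∀ᶠ x : ℝ in atTop,
    c * x ≤ ∑ n ∈ Finset.Icc 1 ⌊x⌋₊, Real.log (a n) := by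
  refine ⟨log 2 / 4, by positivity, ?_⟩
  filter_upwards [eventually_ge_atTop 6] with x hx
  set N := ⌊x⌋₊
  have hxN : x < N + 1 := Nat.lt_floor_add_one x
  have hNK : (N : ℝ) ≤ 2 * ((N - 1) / 2 : ℕ) + 2 := by
    exact_mod_cast (by omega : N ≤ 2 * ((N - 1) / 2) + 2)
  calc log 2 / 4 * x ≤ log 2 / 4 * (4 * ((N - 1) / 2 : ℕ)) :=
        mul_le_mul_of_nonneg_left (by linarith) (by positivity)
    _ = log 2 * ((N - 1) / 2 : ℕ) := by ring
    _ ≤ _ := log_two_mul_le_sum_log_a N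
end

section
/- For all integers k ≥ 2, Σ_{i=2}^{k−1} d_i · log d_i > (log 3)·p_k − 2·log(3/2)·k − 3·log 3, where d_i = p_{i+1} − p_i and p_i is the i-th prime. -/
open Finset Filter Asymptotics

/-!
Each gap `d = p (i + 1) - p i` with `i ≥ 2` is a gap between odd primes, so `d ≥ 2`; hence
`d log d ≥ d log 3 - 2 log (3/2)`, with equality at `d = 2` and the correction term dropped when
`d ≥ 3`. Summing over the `k - 2` gaps and telescoping `∑ d = p k - p 2 = p k - 3` gives the bound,
even with the slack `4 log (3/2)`.
-/

lemma p_prime (k : ℕ) : (p k).Prime := Nat.prime_nth_prime _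

lemma p_two : p 2 = 3 := Nat.nth_prime_one_eq_three

lemma p_lt_p_succ {i : ℕ} (hi : 1 ≤ i) : p i < p (i + 1) :=
  (Nat.nth_lt_nth Nat.infinite_setOfPred_prime).2 (by omega)

lemma three_le_p {i : ℕ} (hi : 2 ≤ i) : 3 ≤ p i := by
  rw [← p_two, p, p]
  exact (Nat.nth_le_nth Nat.infinite_setOfPred_prime).2 (by omega)

lemma p_add_two_le_p_succ {i : ℕ} (hi : 2 ≤ i) : p i + 2 ≤ p (i + 1) := by
  have hlt := p_lt_p_succ (i := i) (by omega)
  have h3 := three_le_p hi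
  have hodd : Odd (p i) := (p_prime i).odd_of_ne_two (by omega)
  have hodd' : Odd (p (i + 1)) := (p_prime _).odd_of_ne_two (by omega)
  obtain ⟨c, hc⟩ := Nat.Odd.sub_odd hodd' hodd
  omega

lemma sum_Icc_p_succ_sub_p {k : ℕ} (hk : 2 ≤ k) :
    ∑ i ∈ Icc 2 (k - 1), ((p (i + 1) : ℝ) - p i) = p k - 3 := by
  have hIcc : Icc 2 (k - 1) = Ico 2 k := by ext; simp only [mem_Icc, mem_Ico]; omega
  rw [hIcc, sum_Ico_sub (fun i ↦ (p i : ℝ)) hk, p_two]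
  norm_num

lemma log_three_mul_sub_le_mul_log {d : ℕ} (hd : 2 ≤ d) :
    Real.log 3 * d - 2 * Real.log (3 / 2) ≤ d * Real.log d := by
  rcases hd.eq_or_lt with rfl | h
  · rw [Real.log_div (by norm_num) (by norm_num)]
    push_cast
    linarith
  · have hlog : Real.log 3 ≤ Real.log d := Real.log_le_log (by norm_num) (by exact_mod_cast h)
    have : 0 ≤ Real.log (3 / 2) := Real.log_nonneg (by norm_num)
    nlinarith

theorem stmt_19 : ∀ k : ℕ, 2 ≤ k →
    ∑ i ∈ Finset.Icc 2 (k - 1), ((p (i + 1) : ℝ) - (p i : ℝ)) * Real.log ((p (i + 1) : ℝ) - (p i : ℝ)) >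
      Real.log 3 * (p k : ℝ) - 2 * Real.log (3 / 2) * k - 3 * Real.log 3 := by
  intro k hk
  have hterm : ∀ i ∈ Icc 2 (k - 1),
      Real.log 3 * ((p (i + 1) : ℝ) - p i) - 2 * Real.log (3 / 2) ≤
        ((p (i + 1) : ℝ) - p i) * Real.log ((p (i + 1) : ℝ) - p i) := by
    intro i hi
    have hgap := p_add_two_le_p_succ (mem_Icc.1 hi).1
    have := log_three_mul_sub_le_mul_log (d := p (i + 1) - p i) (by omega)
    rwa [Nat.cast_sub (by omega)] at this
  have hsum := sum_le_sum hterm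
  rw [sum_sub_distrib, ← mul_sum, sum_Icc_p_succ_sub_p hk, sum_const, Nat.card_Icc,
    nsmul_eq_mul, show k - 1 + 1 - 2 = k - 2 by omega, Nat.cast_sub hk] at hsum
  have : 0 < Real.log (3 / 2) := Real.log_pos (by norm_num)
  push_cast at hsum
  linarith
end
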